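/- Let n ≥ 2, p a probability vector on {1,...,n}, ρ > 0, and h real scores on labels with margin ρ_h(y) = h(y) − max_{y'≠y} h(y') and predicted label ĥ = argmax_y h(y). Then Σ_y p(y)·min{max{0, 1 − ρ_h(y)/ρ}, 1} = 1 − min{1, ρ_h(ĥ)/ρ}·p(ĥ), and consequently Σ_y p(y)·min{max{0, 1 − ρ_h(y)/ρ}, 1} − (1 − max_y p(y)) ≥ max_y p(y) − p(ĥ). -/
import Mathlib


/-- Maximum of a real-valued function over `Fin n`, `n > 0`. -/
noncomputable def fmax {n : ℕ} (hn : 0 < n) (f : Fin n → ℝ) : ℝ :=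
  Finset.univ.sup' (Finset.univ_nonempty_iff.mpr ⟨⟨0, hn⟩⟩) f

/-- `max_{y' ≠ y} h y'` over `Fin n`, `2 ≤ n`. -/
noncomputable def maxOther {n : ℕ} (hn : 2 ≤ n) (h : Fin n → ℝ) (y : Fin n) : ℝ :=
  (Finset.univ.erase y).sup'
    (by
      rw [← Finset.card_pos, Finset.card_erase_of_mem (Finset.mem_univ y),
        Finset.card_univ, Fintype.card_fin]
      omega) h

/-- Confidence margin `ρ_h(y) = h(y) − max_{y'≠y} h(y')`. -/
noncomputable def margin {n : ℕ} (hn : 2 ≤ n) (h : Fin n → ℝ) (y : Fin n) : ℝ :=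
  h y - maxOther hn h y

theorem stmt_9 {n : ℕ} (hn : 2 ≤ n) (p : Fin n → ℝ)
    (hp0 : ∀ y, 0 ≤ p y) (hpsum : ∑ y, p y = 1)
    (ρ : ℝ) (hρ : 0 < ρ) (h : Fin n → ℝ) (yhat : Fin n) (hyhat : ∀ y, h y ≤ h yhat) :
    (∑ y, p y * min (max 0 (1 - margin hn h y / ρ)) 1
      = 1 - min 1 (margin hn h yhat / ρ) * p yhat) ∧
    (fmax (by omega) p - p yhat
      ≤ ∑ y, p y * min (max 0 (1 - margin hn h y / ρ)) 1 - (1 - fmax (by omega) p)) := by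
  have hmyhat : 0 ≤ margin hn h yhat := by
    have : maxOther hn h yhat ≤ h yhat := by
      apply Finset.sup'_le
      intro y _
      exact hyhat y
    simpa [margin] using this
  have hne : ∀ y : Fin n, y ≠ yhat → margin hn h y ≤ 0 := by
    intro y hy
    have : h yhat ≤ maxOther hn h y := by
      apply Finset.le_sup'
      simp [Finset.mem_erase, Ne.symm hy]
    have := (hyhat y).trans this
    simp [margin]; linarith
  have key : ∑ y, p y * min (max 0 (1 - margin hn h y / ρ)) 1
      = 1 - min 1 (margin hn h yhat / ρ) * p yhat := by
    rw [← Finset.sum_erase_add _ _ (Finset.mem_univ yhat)]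
    have h1 : ∑ y ∈ Finset.univ.erase yhat, p y * min (max 0 (1 - margin hn h y / ρ)) 1
        = ∑ y ∈ Finset.univ.erase yhat, p y := by
      apply Finset.sum_congr rfl
      intro y hy
      have hy' : y ≠ yhat := (Finset.mem_erase.mp hy).1
      have hm := hne y hy'
      have ht : margin hn h y / ρ ≤ 0 := div_nonpos_of_nonpos_of_nonneg hm hρ.le
      have : min (max 0 (1 - margin hn h y / ρ)) 1 = 1 := by
        rw [max_eq_right (by linarith), min_eq_right (by linarith)]
      rw [this, mul_one]
    have h2 : ∑ y ∈ Finset.univ.erase yhat, p y = 1 - p yhat := by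
      have := Finset.sum_erase_add Finset.univ p (Finset.mem_univ yhat)
      linarith [hpsum ▸ this]
    have ht : 0 ≤ margin hn h yhat / ρ := div_nonneg hmyhat hρ.le
    have h3 : min (max 0 (1 - margin hn h yhat / ρ)) 1
        = 1 - min 1 (margin hn h yhat / ρ) := by
      rcases le_total 1 (margin hn h yhat / ρ) with hle | hle
      · rw [min_eq_left hle, max_eq_left (by linarith), min_eq_left (by norm_num)]
        ring
      · rw [min_eq_right hle, max_eq_right (by linarith), min_eq_left (by linarith)]
    rw [h1, h2, h3]
    ring
  refine ⟨key, ?_⟩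
  rw [key]
  have h1 : min 1 (margin hn h yhat / ρ) ≤ 1 := min_le_left _ _
  nlinarith [hp0 yhat]
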